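/- Let Γ ∈ ℝ^{d×d} be symmetric positive definite, let g, y† ∈ ℝ^d, and let α ∈ (0, 1). Then the matrix-valued integral ∫_{ℝ^d} (y−g)(y−g)ᵀ f_gauss(y; g, Γ) f_gauss(y; y†, ((1−α)/α)Γ) dy equals f_gauss(y†; g, α⁻¹Γ) · [ (1−α)Γ + α²(y†−g)(y†−g)ᵀ ]. -/

import Mathlib

/-!
Completing the square, the product of the two densities is the constant `f(y†; g, α⁻¹Γ)` times
the Gaussian density with mean `g + α (y† - g)` and covariance `(1 - α)Γ`. The integral is then a
second moment of that Gaussian, `(1 - α)Γ + α² (y† - g)(y† - g)ᵀ`. The moment is computed by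
writing the covariance as `L Lᵀ` and substituting `y = L z + mean`, which turns the density into
a product of one-dimensional standard normal densities; the moments of those are the mean and
variance of `gaussianReal`.
-/

open MeasureTheory Matrix

/-- The Gaussian density `f_gauss(y; m, Σ) = det(2πΣ)^{-1/2} exp(-½ (y-m)ᵀ Σ⁻¹ (y-m))`. -/
noncomputable def fgauss {d : ℕ} (m : Fin d → ℝ) (S : Matrix (Fin d) (Fin d) ℝ)
    (y : Fin d → ℝ) : ℝ :=
  (Real.sqrt ((2 * Real.pi) ^ d * S.det))⁻¹ *
    Real.exp (-(1 / 2 : ℝ) * ((y - m) ⬝ᵥ S⁻¹ *ᵥ (y - m)))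

open ProbabilityTheory Real

section GaussianPDFReal

variable {μ : ℝ} {v : NNReal}

lemma integral_mul_gaussianPDFReal_eq_integral (hv : v ≠ 0) (f : ℝ → ℝ) :
    ∫ x, f x * gaussianPDFReal μ v x = ∫ x, f x ∂gaussianReal μ v := by
  simp_rw [integral_gaussianReal_eq_integral_smul hv, smul_eq_mul, mul_comm]

lemma integrable_pow_mul_gaussianPDFReal (hv : v ≠ 0) (n : ℕ) :
    Integrable (fun x => x ^ n * gaussianPDFReal μ v x) := by
  have h : Integrable (fun x : ℝ => x ^ n) (gaussianReal μ v) :=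
    integrable_pow_of_mem_interior_integrableExpSet (X := id)
      (by simp [integrableExpSet_id_gaussianReal]) n
  rw [gaussianReal_of_var_ne_zero _ hv, integrable_withDensity_iff_integrable_smul'
    (measurable_gaussianPDF μ v) (ae_of_all _ fun _ => gaussianPDF_lt_top)] at h
  simpa [toReal_gaussianPDF, mul_comm] using h

lemma integral_mul_gaussianPDFReal (hv : v ≠ 0) : ∫ x, x * gaussianPDFReal μ v x = μ := by
  rw [integral_mul_gaussianPDFReal_eq_integral hv, integral_id_gaussianReal]

lemma integral_sq_mul_gaussianPDFReal (hv : v ≠ 0) :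
    ∫ x, x ^ 2 * gaussianPDFReal μ v x = v + μ ^ 2 := by
  have h := variance_eq_sub (memLp_id_gaussianReal (μ := μ) (v := v) 2)
  simp only [variance_id_gaussianReal, Pi.pow_apply, id_eq, integral_id_gaussianReal] at h
  rw [integral_mul_gaussianPDFReal_eq_integral hv]
  linarith

end GaussianPDFReal

section StdGaussianPDF

variable {ι : Type*} [Fintype ι]

noncomputable def stdGaussianPDF (z : ι → ℝ) : ℝ := ∏ i, gaussianPDFReal 0 1 (z i)

lemma stdGaussianPDF_eq (z : ι → ℝ) :
    stdGaussianPDF z = (√(2 * π) ^ Fintype.card ι)⁻¹ * exp (-(1 / 2) * (z ⬝ᵥ z)) := by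
  simp only [stdGaussianPDF, gaussianPDFReal, Finset.prod_mul_distrib, ← exp_sum, dotProduct,
    Finset.mul_sum, Finset.prod_const, Finset.card_univ, inv_pow, NNReal.coe_one, mul_one,
    sub_zero]
  congr 2
  exact Finset.sum_congr rfl fun i _ => by ring

lemma integrable_prod_pow_mul_stdGaussianPDF (n : ι → ℕ) :
    Integrable (fun z : ι → ℝ => (∏ i, z i ^ n i) * stdGaussianPDF z) := by
  simp_rw [stdGaussianPDF, ← Finset.prod_mul_distrib]
  exact Integrable.fintype_prod fun i => integrable_pow_mul_gaussianPDFReal one_ne_zero (n i)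

lemma integral_prod_pow_mul_stdGaussianPDF (n : ι → ℕ) :
    ∫ z : ι → ℝ, (∏ i, z i ^ n i) * stdGaussianPDF z =
      ∏ i, ∫ x, x ^ n i * gaussianPDFReal 0 1 x := by
  simp_rw [stdGaussianPDF, ← Finset.prod_mul_distrib]
  exact integral_fintype_prod_volume_eq_prod (fun i x => x ^ n i * gaussianPDFReal 0 1 x)

lemma integrable_stdGaussianPDF : Integrable (stdGaussianPDF (ι := ι)) := by
  simpa using integrable_prod_pow_mul_stdGaussianPDF (ι := ι) 0

lemma integral_stdGaussianPDF : ∫ z : ι → ℝ, stdGaussianPDF z = 1 := by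
  simpa [integral_gaussianPDFReal_eq_one 0 one_ne_zero] using
    integral_prod_pow_mul_stdGaussianPDF (ι := ι) 0

lemma dotProduct_mul_dotProduct_mul_stdGaussianPDF (a b z : ι → ℝ) :
    a ⬝ᵥ z * (b ⬝ᵥ z) * stdGaussianPDF z =
      ∑ k, ∑ l, a k * b l * (z k * z l * stdGaussianPDF z) := by
  simp_rw [dotProduct, Finset.sum_mul_sum, Finset.sum_mul]
  exact Finset.sum_congr rfl fun k _ => Finset.sum_congr rfl fun l _ => by ring

variable [DecidableEq ι]

lemma prod_pow_single (z : ι → ℝ) (k : ι) : ∏ i, z i ^ (Pi.single k 1 : ι → ℕ) i = z k := by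
  simp [Pi.single_apply, pow_ite]

lemma prod_pow_single_add_single (z : ι → ℝ) (k l : ι) :
    ∏ i, z i ^ (Pi.single k 1 + Pi.single l 1 : ι → ℕ) i = z k * z l := by
  simp_rw [Pi.add_apply, pow_add, Finset.prod_mul_distrib, prod_pow_single]

lemma integrable_mul_stdGaussianPDF (k : ι) :
    Integrable (fun z : ι → ℝ => z k * stdGaussianPDF z) := by
  simpa only [prod_pow_single] using integrable_prod_pow_mul_stdGaussianPDF (Pi.single k 1)

lemma integrable_mul_mul_stdGaussianPDF (k l : ι) :
    Integrable (fun z : ι → ℝ => z k * z l * stdGaussianPDF z) := by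
  refine (integrable_prod_pow_mul_stdGaussianPDF (Pi.single k 1 + Pi.single l 1)).congr
    (ae_of_all _ fun z => ?_)
  dsimp only
  rw [prod_pow_single_add_single]

lemma integral_mul_stdGaussianPDF (k : ι) : ∫ z : ι → ℝ, z k * stdGaussianPDF z = 0 := by
  simp_rw [← prod_pow_single _ k, integral_prod_pow_mul_stdGaussianPDF]
  exact Finset.prod_eq_zero (Finset.mem_univ k) (by simp [integral_mul_gaussianPDFReal])

lemma integral_mul_mul_stdGaussianPDF (k l : ι) :
    ∫ z : ι → ℝ, z k * z l * stdGaussianPDF z = if k = l then 1 else 0 := by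
  simp_rw [← prod_pow_single_add_single _ k l, integral_prod_pow_mul_stdGaussianPDF]
  split_ifs with hkl
  · subst hkl
    rw [Finset.prod_eq_single k
      (fun i _ hi => by simp [hi, integral_gaussianPDFReal_eq_one 0 one_ne_zero]) (by simp)]
    simp [integral_sq_mul_gaussianPDFReal]
  · exact Finset.prod_eq_zero (Finset.mem_univ k)
      (by simp [hkl, integral_mul_gaussianPDFReal])

lemma integrable_dotProduct_mul_stdGaussianPDF (a : ι → ℝ) :
    Integrable (fun z : ι → ℝ => a ⬝ᵥ z * stdGaussianPDF z) := by
  simp_rw [dotProduct, Finset.sum_mul, mul_assoc]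
  exact integrable_finsetSum _ fun k _ => (integrable_mul_stdGaussianPDF k).const_mul (a k)

lemma integral_dotProduct_mul_stdGaussianPDF (a : ι → ℝ) :
    ∫ z : ι → ℝ, a ⬝ᵥ z * stdGaussianPDF z = 0 := by
  simp_rw [dotProduct, Finset.sum_mul, mul_assoc]
  rw [integral_finsetSum _ fun k _ => (integrable_mul_stdGaussianPDF k).const_mul (a k)]
  simp [integral_const_mul, integral_mul_stdGaussianPDF]

lemma integrable_dotProduct_mul_dotProduct_mul_stdGaussianPDF (a b : ι → ℝ) :
    Integrable (fun z : ι → ℝ => a ⬝ᵥ z * (b ⬝ᵥ z) * stdGaussianPDF z) := by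
  simp_rw [dotProduct_mul_dotProduct_mul_stdGaussianPDF]
  exact integrable_finsetSum _ fun k _ => integrable_finsetSum _ fun l _ =>
    (integrable_mul_mul_stdGaussianPDF k l).const_mul _

lemma integral_dotProduct_mul_dotProduct_mul_stdGaussianPDF (a b : ι → ℝ) :
    ∫ z : ι → ℝ, a ⬝ᵥ z * (b ⬝ᵥ z) * stdGaussianPDF z = a ⬝ᵥ b := by
  simp_rw [dotProduct_mul_dotProduct_mul_stdGaussianPDF]
  rw [integral_finsetSum _ fun k _ => integrable_finsetSum _ fun l _ =>
    (integrable_mul_mul_stdGaussianPDF k l).const_mul _]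
  simp_rw [integral_finsetSum _ fun l _ => (integrable_mul_mul_stdGaussianPDF _ l).const_mul _,
    integral_const_mul, integral_mul_mul_stdGaussianPDF]
  simp [dotProduct]

lemma integral_affine_mul_affine_mul_stdGaussianPDF (a b : ι → ℝ) (p q : ℝ) :
    ∫ z : ι → ℝ, (a ⬝ᵥ z + p) * (b ⬝ᵥ z + q) * stdGaussianPDF z = a ⬝ᵥ b + p * q := by
  have hexpand : ∀ z : ι → ℝ, (a ⬝ᵥ z + p) * (b ⬝ᵥ z + q) * stdGaussianPDF z =
      a ⬝ᵥ z * (b ⬝ᵥ z) * stdGaussianPDF z + (q * (a ⬝ᵥ z * stdGaussianPDF z) +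
        (p * (b ⬝ᵥ z * stdGaussianPDF z) + p * q * stdGaussianPDF z)) := fun z => by ring
  have hint_a := (integrable_dotProduct_mul_stdGaussianPDF a).const_mul q
  have hint_b := (integrable_dotProduct_mul_stdGaussianPDF b).const_mul p
  have hint_c := (integrable_stdGaussianPDF (ι := ι)).const_mul (p * q)
  simp_rw [hexpand]
  rw [integral_add (integrable_dotProduct_mul_dotProduct_mul_stdGaussianPDF a b)
      (hint_a.fun_add (hint_b.fun_add hint_c)),
    integral_add hint_a (hint_b.fun_add hint_c), integral_add hint_b hint_c]
  simp [integral_const_mul, integral_dotProduct_mul_dotProduct_mul_stdGaussianPDF,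
    integral_dotProduct_mul_stdGaussianPDF, integral_stdGaussianPDF]

end StdGaussianPDF

section LinearAlgebra

variable {ι : Type*} [Fintype ι]

lemma dotProduct_mulVec_comm_of_isSymm {A : Matrix ι ι ℝ} (hA : A.IsSymm) (u w : ι → ℝ) :
    u ⬝ᵥ A *ᵥ w = w ⬝ᵥ A *ᵥ u := by
  rw [dotProduct_mulVec, ← mulVec_transpose, hA.eq, dotProduct_comm]

lemma sub_smul_dotProduct_mulVec_sub_smul {A : Matrix ι ι ℝ} (hA : A.IsSymm) (u w : ι → ℝ)
    (c : ℝ) : (u - c • w) ⬝ᵥ A *ᵥ (u - c • w) =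
      u ⬝ᵥ A *ᵥ u - 2 * c * (u ⬝ᵥ A *ᵥ w) + c ^ 2 * (w ⬝ᵥ A *ᵥ w) := by
  simp only [mulVec_sub, mulVec_smul, sub_dotProduct, dotProduct_sub, smul_dotProduct,
    dotProduct_smul, smul_eq_mul, dotProduct_mulVec_comm_of_isSymm hA w u]
  ring

variable [DecidableEq ι]

lemma inv_smul_of_ne_zero {A : Matrix ι ι ℝ} (hA : IsUnit A.det) {c : ℝ} (hc : c ≠ 0) :
    (c • A)⁻¹ = c⁻¹ • A⁻¹ :=
  inv_eq_left_inv (by simp [hc, smul_smul, nonsing_inv_mul _ hA])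

open scoped MatrixOrder in
lemma exists_mul_transpose_eq_of_posSemidef {S : Matrix ι ι ℝ} (hS : S.PosSemidef) :
    ∃ L : Matrix ι ι ℝ, L * Lᵀ = S := by
  obtain ⟨B, hB⟩ := CStarAlgebra.nonneg_iff_eq_star_mul_self.mp hS.nonneg
  exact ⟨Bᵀ, by rw [hB, transpose_transpose]; rfl⟩

lemma integral_comp_mulVec (L : Matrix ι ι ℝ) (hL : L.det ≠ 0) (F : (ι → ℝ) → ℝ) :
    ∫ v, F v = |L.det| * ∫ z, F (L *ᵥ z) := by
  have hL' : IsUnit L := (isUnit_iff_isUnit_det L).mpr hL.isUnit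
  have h := integral_image_eq_integral_abs_det_fderiv_smul volume MeasurableSet.univ
    (fun z _ => (LinearMap.toContinuousLinearMap (toLin' L)).hasFDerivAt.hasFDerivWithinAt)
    (f := (L *ᵥ ·)) (mulVec_injective_iff_isUnit.mpr hL').injOn F
  rw [Set.image_univ, (mulVec_surjective_iff_isUnit.mpr hL').range_eq,
    Measure.restrict_univ] at h
  rw [h, integral_smul, ContinuousLinearMap.det, LinearMap.coe_toContinuousLinearMap,
    LinearMap.det_toLin', smul_eq_mul]

end LinearAlgebra

section Fgauss

variable {d : ℕ}

lemma fgauss_eq_fgauss_zero (m : Fin d → ℝ) (S : Matrix (Fin d) (Fin d) ℝ) (y : Fin d → ℝ) :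
    fgauss m S y = fgauss 0 S (y - m) := by
  rw [fgauss, fgauss, sub_zero]

lemma fgauss_zero_mulVec {S L : Matrix (Fin d) (Fin d) ℝ} (hLS : L * Lᵀ = S) (hL : L.det ≠ 0)
    (z : Fin d → ℝ) : fgauss 0 S (L *ᵥ z) = |L.det|⁻¹ * stdGaussianPDF z := by
  have hmat : Lᵀ * S⁻¹ * L = 1 := by
    rw [← hLS, Matrix.mul_inv_rev, Matrix.mul_assoc, Matrix.mul_assoc,
      Matrix.nonsing_inv_mul _ hL.isUnit, Matrix.mul_one,
      Matrix.mul_nonsing_inv _ (det_transpose L ▸ hL).isUnit]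
  have hquad : L *ᵥ z ⬝ᵥ S⁻¹ *ᵥ (L *ᵥ z) = z ⬝ᵥ z := by
    rw [mulVec_mulVec, ← vecMul_transpose, ← dotProduct_mulVec, mulVec_mulVec, ← Matrix.mul_assoc,
      hmat, one_mulVec]
  have hdet : √((2 * π) ^ d * S.det) = √(2 * π) ^ d * |L.det| := by
    rw [← sqrt_sq (by positivity : 0 ≤ √(2 * π) ^ d * |L.det|)]
    congr 1
    rw [mul_pow (√(2 * π) ^ d), ← pow_mul, mul_comm d, pow_mul, sq_sqrt (by positivity), sq_abs,
      ← hLS, det_mul, det_transpose, sq]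
  rw [fgauss, stdGaussianPDF_eq, sub_zero, hquad, hdet, Fintype.card_fin, mul_inv]
  ring

lemma integral_mul_mul_fgauss {S : Matrix (Fin d) (Fin d) ℝ} (hS : S.PosDef)
    (m g : Fin d → ℝ) (i j : Fin d) :
    ∫ y, (y - g) i * (y - g) j * fgauss m S y = S i j + (m - g) i * (m - g) j := by
  obtain ⟨L, hLS⟩ := exists_mul_transpose_eq_of_posSemidef hS.posSemidef
  have hL : L.det ≠ 0 := fun h => hS.det_pos.ne' (by rw [← hLS, det_mul, h, zero_mul])
  have hrow : ∀ (k : Fin d) (z : Fin d → ℝ), (L *ᵥ z + m - g) k = L k ⬝ᵥ z + (m - g) k :=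
    fun k z => by simp only [Pi.sub_apply, Pi.add_apply, mulVec]; ring
  have hcov : L i ⬝ᵥ L j = S i j := by rw [← hLS, mul_apply]; rfl
  rw [← integral_add_right_eq_self _ m, integral_comp_mulVec L hL]
  simp_rw [fgauss_eq_fgauss_zero m, add_sub_cancel_right, fgauss_zero_mulVec hLS hL, hrow,
    mul_left_comm _ |L.det|⁻¹, integral_const_mul, ← mul_assoc,
    mul_inv_cancel₀ (abs_ne_zero.mpr hL), one_mul]
  rw [integral_affine_mul_affine_mul_stdGaussianPDF, hcov]

lemma fgauss_smul_mul_fgauss_smul {Γ : Matrix (Fin d) (Fin d) ℝ} (hΓ : Γ.PosDef)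
    {s t : ℝ} (hs : 0 < s) (ht : 0 < t) (a b y : Fin d → ℝ) :
    fgauss a (s • Γ) y * fgauss b (t • Γ) y =
      fgauss a ((s + t) • Γ) b *
        fgauss ((s + t)⁻¹ • (t • a + s • b)) ((s * t / (s + t)) • Γ) y := by
  have hst : 0 < s + t := add_pos hs ht
  have hinv : ∀ {c : ℝ}, 0 < c → (c • Γ)⁻¹ = c⁻¹ • Γ⁻¹ := fun hc =>
    inv_smul_of_ne_zero hΓ.det_pos.ne'.isUnit hc.ne'
  have hdet_smul : ∀ {c : ℝ}, 0 < c → 0 < (c • Γ).det := fun hc => (hΓ.smul hc).det_pos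
  have hpre : ((2 * π) ^ d * (s • Γ).det) * ((2 * π) ^ d * (t • Γ).det) =
      ((2 * π) ^ d * ((s + t) • Γ).det) * ((2 * π) ^ d * ((s * t / (s + t)) • Γ).det) := by
    simp only [det_smul, Fintype.card_fin, div_pow, mul_pow]
    field_simp
  have hexp : -(1 / 2) * ((y - a) ⬝ᵥ (s • Γ)⁻¹ *ᵥ (y - a)) +
      -(1 / 2) * ((y - b) ⬝ᵥ (t • Γ)⁻¹ *ᵥ (y - b)) =
      -(1 / 2) * ((b - a) ⬝ᵥ ((s + t) • Γ)⁻¹ *ᵥ (b - a)) +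
      -(1 / 2) * ((y - (s + t)⁻¹ • (t • a + s • b)) ⬝ᵥ ((s * t / (s + t)) • Γ)⁻¹ *ᵥ
        (y - (s + t)⁻¹ • (t • a + s • b))) := by
    have hmean : y - (s + t)⁻¹ • (t • a + s • b) = (y - a) - (s / (s + t)) • (b - a) := by
      ext i
      simp only [Pi.sub_apply, Pi.add_apply, Pi.smul_apply, smul_eq_mul]
      field_simp
      ring
    have hb : y - b = (y - a) - (1 : ℝ) • (b - a) := by rw [one_smul]; abel
    rw [hmean, hb, hinv hs, hinv ht, hinv hst, hinv (by positivity)]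
    simp only [smul_mulVec, dotProduct_smul, smul_eq_mul,
      sub_smul_dotProduct_mulVec_sub_smul (isHermitian_iff_isSymm.mp hΓ.inv.isHermitian)]
    field_simp
    ring
  unfold fgauss
  rw [mul_mul_mul_comm, ← exp_add, mul_mul_mul_comm _ (exp _), ← exp_add, ← mul_inv, ← mul_inv,
    ← sqrt_mul (by positivity [hdet_smul hs]), ← sqrt_mul (by positivity [hdet_smul hst]), hpre,
    hexp]

end Fgauss

/-- the (entrywise) matrix-valued Gaussian second-moment identity
`∫ (y−g)(y−g)ᵀ f(y; g, Γ) f(y; y†, ((1−α)/α)Γ) dy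
  = f(y†; g, α⁻¹Γ) [ (1−α)Γ + α²(y†−g)(y†−g)ᵀ ]`. -/
theorem stmt8 {d : ℕ} (Γ : Matrix (Fin d) (Fin d) ℝ) (hΓ : Γ.PosDef)
    (g ydag : Fin d → ℝ) (α : ℝ) (hα : α ∈ Set.Ioo (0 : ℝ) 1) :
    ∀ i j : Fin d,
      (∫ y : Fin d → ℝ,
        (y - g) i * (y - g) j * (fgauss g Γ y * fgauss ydag (((1 - α) / α) • Γ) y))
      = fgauss g (α⁻¹ • Γ) ydag *
          ((1 - α) • Γ + α ^ 2 • vecMulVec (ydag - g) (ydag - g)) i j := by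
  intro i j
  obtain ⟨hα0, hα1⟩ := hα
  have hβ : 0 < (1 - α) / α := div_pos (by linarith) hα0
  have hsum : 1 + (1 - α) / α = α⁻¹ := by field_simp; ring
  have hprod : 1 * ((1 - α) / α) / (1 + (1 - α) / α) = 1 - α := by rw [hsum]; field_simp
  have hmean :
      (1 + (1 - α) / α)⁻¹ • (((1 - α) / α) • g + (1 : ℝ) • ydag) = g + α • (ydag - g) := by
    ext k
    simp only [hsum, inv_inv, Pi.add_apply, Pi.smul_apply, Pi.sub_apply, smul_eq_mul]
    field_simp
    ring
  have hdensity := fgauss_smul_mul_fgauss_smul hΓ one_pos hβ g ydag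
  rw [hprod, hmean, one_smul, hsum] at hdensity
  simp_rw [hdensity, mul_left_comm _ (fgauss g (α⁻¹ • Γ) ydag), integral_const_mul,
    integral_mul_mul_fgauss (hΓ.smul (by linarith : 0 < 1 - α))]
  congr 1
  simp only [Matrix.add_apply, Matrix.smul_apply, vecMulVec_apply, smul_eq_mul, Pi.sub_apply,
    Pi.add_apply, Pi.smul_apply, add_sub_cancel_left]
  ring
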